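/- arXiv:2409.00521 — 5 statements merged into one kernel-verified Lean document; each statement's English description precedes it below -/
import Mathlib

section
/- For any 1 ≤ k ≤ n and positive integers a_1, …, a_n, one has q_n(a_1, …, a_k, …, a_n) > (a_k / 2) · q_{n-1}(a_1, …, a_{k-1}, a_{k+1}, …, a_n), where the tuple on the right is obtained by deleting the k-th entry. -/
def contQ : List ℕ → ℕ
  | [] => 1
  | [a] => a
  | a :: b :: l => a * contQ (b :: l) + contQ l

def contD : List ℕ → ℕ
  | [] => 0
  | [_] => 1
  | a :: b :: l => a * contD (b :: l) + contD l

def contT : List ℕ → ℕ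
  | [] => 0
  | _ :: t => contQ t

lemma contQ_cons (a : ℕ) (s : List ℕ) : contQ (a :: s) = a * contQ s + contT s := by
  cases s <;> simp [contQ, contT]

lemma contQ_split : ∀ p s : List ℕ, contQ (p ++ s) = contQ p * contQ s + contD p * contT s
  | [], s => by simp [contQ, contD]
  | [a], s => by simp [contQ, contD, contQ_cons]
  | a :: b :: t, s => by
      have h1 := contQ_split (b :: t) s
      have h2 := contQ_split t s
      simp only [List.cons_append] at *
      show a * contQ (b :: (t ++ s)) + contQ (t ++ s) = _
      rw [h1, h2]
      show _ = (a * contQ (b :: t) + contQ t) * contQ s +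
        (a * contD (b :: t) + contD t) * contT s
      ring

lemma one_le_contQ : ∀ l : List ℕ, (∀ a ∈ l, 0 < a) → 1 ≤ contQ l
  | [], _ => le_refl 1
  | [a], h => h a (by simp)
  | a :: b :: t, h => by
      have := one_le_contQ (b :: t) (fun x hx => h x (List.mem_cons_of_mem a hx))
      have ha := h a (by simp)
      simp only [contQ]
      nlinarith

lemma contD_le_contQ : ∀ l : List ℕ, (∀ a ∈ l, 0 < a) → contD l ≤ contQ l
  | [], _ => by simp [contD, contQ]
  | [a], h => h a (by simp)
  | a :: b :: t, h => by
      have h1 := contD_le_contQ (b :: t) (fun x hx => h x (by simp at *; tauto))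
      have h2 := contD_le_contQ t (fun x hx => h x (by simp at *; tauto))
      show a * contD (b :: t) + contD t ≤ a * contQ (b :: t) + contQ t
      have := Nat.mul_le_mul_left a h1
      omega

lemma contT_le_contQ : ∀ l : List ℕ, (∀ a ∈ l, 0 < a) → contT l ≤ contQ l
  | [], _ => by simp [contT, contQ]
  | a :: t, h => by
      have ha := h a (by simp)
      show contQ t ≤ contQ (a :: t)
      rw [contQ_cons]
      nlinarith

theorem stmt2 (l : List ℕ) (hpos : ∀ a ∈ l, 0 < a)
    (i : ℕ) (hi : i < l.length) :
    ((l.get ⟨i, hi⟩ : ℝ) / 2) * contQ (l.eraseIdx i) < (contQ l : ℝ) := by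
  set p := l.take i with hp
  set s := l.drop (i + 1) with hs
  set g := l.get ⟨i, hi⟩ with hg
  have hl : l = p ++ g :: s := by
    rw [hp, hs, hg]
    conv_lhs => rw [← List.take_append_drop i l]
    congr 1
    exact List.drop_eq_getElem_cons hi
  have he : l.eraseIdx i = p ++ s := List.eraseIdx_eq_take_drop_succ l i
  have hposp : ∀ a ∈ p, 0 < a := fun a ha => hpos a (by rw [hl]; simp [ha])
  have hposs : ∀ a ∈ s, 0 < a := fun a ha => hpos a (by rw [hl]; simp [ha])
  have hgpos : 0 < g := hpos g (by rw [hl]; simp)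
  -- natural number inequality
  have key : g * contQ (l.eraseIdx i) < 2 * contQ l := by
    rw [he]
    conv_rhs => rw [hl]
    rw [contQ_split, contQ_split]
    rw [contQ_cons]
    have hKp := one_le_contQ p hposp
    have hKs := one_le_contQ s hposs
    have hDp := contD_le_contQ p hposp
    have hTs := contT_le_contQ s hposs
    set Kp := contQ p
    set Ks := contQ s
    set Dp := contD p
    set Ts := contT s
    -- contT (g :: s) = contQ s
    have hTgs : contT (g :: s) = Ks := rfl
    rw [hTgs]
    -- goal: g * (Kp * Ks + Dp * Ts) < 2 * (Kp * (g * Ks + Ts) + Dp * Ks)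
    rcases Nat.eq_zero_or_pos Ts with h0 | h1
    · rw [h0]
      nlinarith [Nat.mul_le_mul (Nat.mul_le_mul hgpos hKp) hKs]
    · nlinarith [Nat.mul_le_mul (Nat.mul_le_mul_left g hDp) hTs]
  -- cast to ℝ
  rw [div_mul_eq_mul_div, div_lt_iff₀ (by norm_num : (0:ℝ) < 2)]
  have : ((g * contQ (l.eraseIdx i) : ℕ) : ℝ) < ((2 * contQ l : ℕ) : ℝ) := by
    exact_mod_cast key
  push_cast at this
  linarith
end

section
/- For any positive integers a_1, …, a_n and b_1, …, b_k, the lengths of continued fraction cylinders satisfy the bounded distortion property: 1/2 ≤ |I_{n+k}(a_1, …, a_n, b_1, …, b_k)| / (|I_n(a_1, …, a_n)| · |I_k(b_1, …, b_k)|) ≤ 2. -/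
open MeasureTheory

noncomputable def gaussMap (x : ℝ) : ℝ := Int.fract (1 / x)

noncomputable def cfDigit (n : ℕ) (x : ℝ) : ℤ := ⌊1 / (gaussMap^[n] x)⌋

def cylinder (l : List ℕ) : Set ℝ :=
  {x | x ∈ Set.Ioo (0 : ℝ) 1 ∧ ∀ i : Fin l.length, cfDigit i x = l.get i}

/-!
A point `x` has partial quotients `a₁, …, aₙ` exactly when it is `[0; a₁, …, aₙ + t]` with
`t = gaussMap^[n] x ∈ [0, 1)`. As a function of `t` this is the Möbius transformation of the
matrix `∏ᵢ [[0, 1], [1, aᵢ]]`, of determinant `±1`; so up to its endpoints the cylinder is the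
interval between the values at `t = 0` and `t = 1`, of length `1 / (qₙ (qₙ + qₙ₋₁))`.

The matrices multiply under concatenation, so both denominators `qₙ` and `qₙ + qₙ₋₁` of `a ++ b`
lie between `qₙ(a)` and `qₙ(a) + qₙ₋₁(a)` times the corresponding denominator of `b`. Comparing
with `|I(a)| = 1 / (qₙ(a) (qₙ(a) + qₙ₋₁(a)))` loses at most the factor
`(qₙ(a) + qₙ₋₁(a)) / qₙ(a) ≤ 2` in either direction.
-/

open Set

/-- The action of the matrix product `∏ᵢ [[0, 1], [1, aᵢ]]` on a column `(p, q)`; the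
continuants of `l = [a₁, …, aₙ]` are `qₙ = (cfVec l (0, 1)).2` and
`qₙ + qₙ₋₁ = (cfVec l (1, 1)).2`. -/
def cfVec : List ℕ → ℝ × ℝ → ℝ × ℝ
  | [], v => v
  | a :: l, v => ((cfVec l v).2, a * (cfVec l v).2 + (cfVec l v).1)

/-- `[0; a₁, …, aₙ + t]`, the inverse branch of `gaussMap^[n]` on the cylinder of `[a₁, …, aₙ]`. -/
noncomputable def cfBranch : List ℕ → ℝ → ℝ
  | [], t => t
  | a :: l, t => 1 / (a + cfBranch l t)

theorem cfVec_append (a c : List ℕ) (v : ℝ × ℝ) : cfVec (a ++ c) v = cfVec a (cfVec c v) := by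
  induction a with
  | nil => rfl
  | cons x a ih => simp only [List.cons_append, cfVec, ih]

theorem cfVec_eq_add (l : List ℕ) (v : ℝ × ℝ) :
    cfVec l v = v.1 • cfVec l (1, 0) + v.2 • cfVec l (0, 1) := by
  induction l with
  | nil => ext <;> simp [cfVec]
  | cons x l ih =>
    simp only [cfVec, ih]
    ext
    · simp only [Prod.fst_add, Prod.snd_add, Prod.smul_fst, Prod.smul_snd, smul_eq_mul]
    · simp only [Prod.fst_add, Prod.snd_add, Prod.smul_fst, Prod.smul_snd, smul_eq_mul]; ring

theorem cfVec_nonneg (l : List ℕ) {v : ℝ × ℝ} (hv : 0 ≤ v.1 ∧ 0 ≤ v.2) :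
    0 ≤ (cfVec l v).1 ∧ 0 ≤ (cfVec l v).2 := by
  induction l with
  | nil => exact hv
  | cons x l ih =>
    obtain ⟨h₁, h₂⟩ := ih
    simp only [cfVec]
    exact ⟨h₂, by positivity⟩

theorem cfVec_mem_cone {l : List ℕ} (hl : ∀ x ∈ l, 0 < x) {v : ℝ × ℝ}
    (hv : 0 ≤ v.1 ∧ v.1 ≤ v.2 ∧ 0 < v.2) :
    0 ≤ (cfVec l v).1 ∧ (cfVec l v).1 ≤ (cfVec l v).2 ∧ 0 < (cfVec l v).2 := by
  induction l with
  | nil => exact hv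
  | cons x l ih =>
    obtain ⟨hx, hl⟩ := List.forall_mem_cons.1 hl
    obtain ⟨h₀, h₁, h₂⟩ := ih hl
    have hx : (1 : ℝ) ≤ x := by exact_mod_cast hx
    simp only [cfVec]
    refine ⟨h₂.le, ?_, ?_⟩ <;> nlinarith

theorem cfVec_det (l : List ℕ) (v w : ℝ × ℝ) :
    (cfVec l v).1 * (cfVec l w).2 - (cfVec l v).2 * (cfVec l w).1 =
      (-1) ^ l.length * (v.1 * w.2 - v.2 * w.1) := by
  induction l with
  | nil => simp [cfVec]
  | cons x l ih =>
    simp only [cfVec, List.length_cons, pow_succ]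
    linear_combination (-1 : ℝ) * ih

theorem snd_cfVec_one_one_le {l : List ℕ} (hl : ∀ x ∈ l, 0 < x) :
    (cfVec l (1, 1)).2 ≤ 2 * (cfVec l (0, 1)).2 := by
  rcases l.eq_nil_or_concat' with rfl | ⟨l, x, rfl⟩
  · norm_num [cfVec]
  · have hx : (1 : ℝ) ≤ x := by exact_mod_cast hl x (by simp)
    have hΔ := (cfVec_nonneg l (v := (1, 0)) (by simp)).2
    have hq := (cfVec_nonneg l (v := (0, 1)) (by simp)).2
    simp only [cfVec_append, cfVec, mul_one, add_zero]
    rw [cfVec_eq_add l (1, x + 1), cfVec_eq_add l (1, x)]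
    simp only [Prod.snd_add, Prod.smul_snd, smul_eq_mul, one_mul]
    nlinarith

theorem snd_cfVec_mem_Icc (a : List ℕ) {w : ℝ × ℝ} (hw : 0 ≤ w.1 ∧ w.1 ≤ w.2) :
    (cfVec a w).2 ∈ Icc ((cfVec a (0, 1)).2 * w.2) ((cfVec a (1, 1)).2 * w.2) := by
  have hΔ := (cfVec_nonneg a (v := (1, 0)) (by simp)).2
  rw [cfVec_eq_add a w, cfVec_eq_add a (1, 1)]
  simp only [Prod.snd_add, Prod.smul_snd, smul_eq_mul, one_mul, mem_Icc]
  constructor <;> nlinarith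

section cfBranch

variable {l : List ℕ}

theorem cfBranch_nonneg {t : ℝ} (ht : 0 ≤ t) : 0 ≤ cfBranch l t := by
  induction l with
  | nil => exact ht
  | cons x l ih => simp only [cfBranch]; positivity

theorem cfBranch_eq_div (hl : ∀ x ∈ l, 0 < x) {t : ℝ} (ht : t ∈ Icc 0 1) :
    cfBranch l t = (cfVec l (t, 1)).1 / (cfVec l (t, 1)).2 := by
  induction l with
  | nil => simp [cfBranch, cfVec]
  | cons x l ih =>
    obtain ⟨-, hl⟩ := List.forall_mem_cons.1 hl
    obtain ⟨-, -, hq⟩ := cfVec_mem_cone hl (v := (t, 1)) ⟨ht.1, ht.2, one_pos⟩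
    simp only [cfBranch, cfVec, ih hl]
    field_simp

theorem continuousOn_cfBranch (hl : ∀ x ∈ l, 0 < x) : ContinuousOn (cfBranch l) (Ici 0) := by
  induction l with
  | nil => exact continuousOn_id
  | cons x l ih =>
    obtain ⟨hx, hl⟩ := List.forall_mem_cons.1 hl
    have hx : (0 : ℝ) < x := by exact_mod_cast hx
    exact continuousOn_const.div (continuousOn_const.add (ih hl))
      fun t ht ↦ (add_pos_of_pos_of_nonneg hx (cfBranch_nonneg ht)).ne'

theorem monotoneOn_or_antitoneOn_cfBranch (hl : ∀ x ∈ l, 0 < x) :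
    MonotoneOn (cfBranch l) (Ici 0) ∨ AntitoneOn (cfBranch l) (Ici 0) := by
  induction l with
  | nil => exact Or.inl monotoneOn_id
  | cons x l ih =>
    obtain ⟨hx, hl⟩ := List.forall_mem_cons.1 hl
    have hx : (0 : ℝ) < x := by exact_mod_cast hx
    have hpos : ∀ t ∈ Ici (0 : ℝ), 0 < x + cfBranch l t :=
      fun t ht ↦ add_pos_of_pos_of_nonneg hx (cfBranch_nonneg ht)
    rcases ih hl with h | h
    · exact Or.inr fun s hs t ht hst ↦
        one_div_le_one_div_of_le (hpos s hs) (by gcongr; exact h hs ht hst)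
    · exact Or.inl fun s hs t ht hst ↦
        one_div_le_one_div_of_le (hpos t ht) (by gcongr; exact h hs ht hst)

theorem image_cfBranch_Icc (hl : ∀ x ∈ l, 0 < x) :
    cfBranch l '' Icc 0 1 = uIcc (cfBranch l 0) (cfBranch l 1) := by
  have hsub : uIcc (0 : ℝ) 1 ⊆ Ici 0 := by simp [uIcc_of_le, Icc_subset_Ici_self]
  have hcont := (continuousOn_cfBranch hl).mono hsub
  rw [← uIcc_of_le zero_le_one]
  rcases monotoneOn_or_antitoneOn_cfBranch hl with h | h
  · exact hcont.image_uIcc_of_monotoneOn (h.mono hsub)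
  · exact hcont.image_uIcc_of_antitoneOn (h.mono hsub)

end cfBranch

section cylinder

variable {l : List ℕ}

theorem gaussMap_one_div_add (a : ℕ) {s : ℝ} (hs : s ∈ Ico 0 1) : gaussMap (1 / (a + s)) = s := by
  rw [gaussMap, one_div_one_div, add_comm, Int.fract_add_natCast, Int.fract_eq_self.2 hs]

theorem cfDigit_zero_one_div_add (a : ℕ) {s : ℝ} (hs : s ∈ Ico 0 1) :
    cfDigit 0 (1 / (a + s)) = a := by
  rw [cfDigit, Function.iterate_zero_apply, one_div_one_div, add_comm, Int.floor_add_natCast,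
    Int.floor_eq_zero_iff.2 hs, zero_add]

theorem cfDigit_succ (n : ℕ) (x : ℝ) : cfDigit (n + 1) x = cfDigit n (gaussMap x) := by
  rw [cfDigit, cfDigit, Function.iterate_succ_apply]

theorem cfBranch_mem_cylinder (hl : ∀ x ∈ l, 0 < x) {t : ℝ} (ht : t ∈ Ioo 0 1) :
    cfBranch l t ∈ cylinder l := by
  induction l with
  | nil => exact ⟨ht, fun i ↦ i.elim0⟩
  | cons a l ih =>
    obtain ⟨ha, hl⟩ := List.forall_mem_cons.1 hl
    obtain ⟨⟨hs₀, hs₁⟩, hdigits⟩ := ih hl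
    have ha : (1 : ℝ) ≤ a := by exact_mod_cast ha
    have hs : cfBranch l t ∈ Ico 0 1 := ⟨hs₀.le, hs₁⟩
    refine ⟨⟨by simp only [cfBranch]; positivity, ?_⟩, fun i ↦ ?_⟩
    · simp only [cfBranch]
      rw [div_lt_one (by linarith)]
      linarith
    · refine Fin.cases ?_ (fun j ↦ ?_) i
      · exact cfDigit_zero_one_div_add a hs
      · simpa only [cfBranch, Fin.val_succ, cfDigit_succ, gaussMap_one_div_add a hs,
          List.get_eq_getElem, List.getElem_cons_succ] using hdigits j

theorem cfBranch_iterate_gaussMap {x : ℝ}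
    (hx : ∀ i : Fin l.length, cfDigit i x = l.get i) :
    cfBranch l (gaussMap^[l.length] x) = x := by
  induction l generalizing x with
  | nil => rfl
  | cons a l ih =>
    have hfloor : ⌊1 / x⌋ = a := by simpa [cfDigit] using hx 0
    have hinv : 1 / x = a + gaussMap x := by
      rw [gaussMap, ← Int.cast_natCast, ← hfloor, Int.floor_add_fract]
    have htail : cfBranch l (gaussMap^[l.length] (gaussMap x)) = gaussMap x :=
      ih fun i ↦ by simpa [cfDigit_succ] using hx i.succ
    rw [List.length_cons, Function.iterate_succ_apply, cfBranch, htail, ← hinv, one_div_one_div]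

theorem mapsTo_gaussMap : MapsTo gaussMap (Icc 0 1) (Icc 0 1) :=
  fun _ _ ↦ ⟨Int.fract_nonneg _, (Int.fract_lt_one _).le⟩

theorem cylinder_subset_uIcc (hl : ∀ x ∈ l, 0 < x) :
    cylinder l ⊆ uIcc (cfBranch l 0) (cfBranch l 1) := by
  rintro x ⟨hx, hdigits⟩
  rw [← image_cfBranch_Icc hl, ← cfBranch_iterate_gaussMap hdigits]
  exact mem_image_of_mem _ (mapsTo_gaussMap.iterate _ (Ioo_subset_Icc_self hx))

theorem uIoo_subset_cylinder (hl : ∀ x ∈ l, 0 < x) :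
    uIoo (cfBranch l 0) (cfBranch l 1) ⊆ cylinder l := by
  intro y hy
  obtain ⟨t, ⟨ht₀, ht₁⟩, rfl⟩ := image_cfBranch_Icc hl ▸ uIoo_subset_uIcc_self hy
  have h₀ : t ≠ 0 := by rintro rfl; exact left_notMem_uIoo hy
  have h₁ : t ≠ 1 := by rintro rfl; exact right_notMem_uIoo hy
  exact cfBranch_mem_cylinder hl ⟨ht₀.lt_of_ne' h₀, ht₁.lt_of_ne h₁⟩

theorem volume_cylinder_eq_abs_sub (hl : ∀ x ∈ l, 0 < x) :
    volume (cylinder l) = ENNReal.ofReal |cfBranch l 1 - cfBranch l 0| :=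
  le_antisymm (Real.volume_interval ▸ measure_mono (cylinder_subset_uIcc hl))
    (Real.volume_uIoo ▸ measure_mono (uIoo_subset_cylinder hl))

theorem volume_cylinder (hl : ∀ x ∈ l, 0 < x) :
    (volume (cylinder l)).toReal = 1 / ((cfVec l (0, 1)).2 * (cfVec l (1, 1)).2) := by
  obtain ⟨-, -, hq₀⟩ := cfVec_mem_cone hl (v := (0, 1)) (by norm_num)
  obtain ⟨-, -, hq₁⟩ := cfVec_mem_cone hl (v := (1, 1)) (by norm_num)
  have hdet := cfVec_det l (1, 1) (0, 1)
  rw [volume_cylinder_eq_abs_sub hl, ENNReal.toReal_ofReal (abs_nonneg _),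
    cfBranch_eq_div hl (by norm_num), cfBranch_eq_div hl (by norm_num),
    div_sub_div _ _ hq₁.ne' hq₀.ne', hdet, abs_div, abs_of_pos (mul_pos hq₁ hq₀),
    mul_comm (cfVec l (1, 1)).2]
  norm_num

end cylinder

theorem distortion_mem_Icc {α β q₀ q₁ d₀ d₁ : ℝ} (hα : 0 < α) (hβ : β ≤ 2 * α)
    (hq₀ : 0 < q₀) (hq₁ : 0 < q₁) (hd₀ : d₀ ∈ Icc (α * q₀) (β * q₀))
    (hd₁ : d₁ ∈ Icc (α * q₁) (β * q₁)) :
    1 / 2 ≤ 1 / (d₀ * d₁) / (1 / (α * β) * (1 / (q₀ * q₁))) ∧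
      1 / (d₀ * d₁) / (1 / (α * β) * (1 / (q₀ * q₁))) ≤ 2 := by
  obtain ⟨hd₀l, hd₀u⟩ := hd₀
  obtain ⟨hd₁l, hd₁u⟩ := hd₁
  have hαβ : α ≤ β := le_of_mul_le_mul_right (hd₀l.trans hd₀u) hq₀
  have hd₀ : 0 < d₀ := (mul_pos hα hq₀).trans_le hd₀l
  have hd₁ : 0 < d₁ := (mul_pos hα hq₁).trans_le hd₁l
  have hq : 0 < q₀ * q₁ := mul_pos hq₀ hq₁
  have hlower : α * α * (q₀ * q₁) ≤ d₀ * d₁ := by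
    nlinarith [mul_le_mul hd₀l hd₁l (by positivity) hd₀.le]
  have hupper : d₀ * d₁ ≤ β * β * (q₀ * q₁) := by
    nlinarith [mul_le_mul hd₀u hd₁u hd₁.le (by linarith)]
  have hratio : 1 / (d₀ * d₁) / (1 / (α * β) * (1 / (q₀ * q₁))) =
      α * β * (q₀ * q₁) / (d₀ * d₁) := by
    field_simp
  rw [hratio, le_div_iff₀ (by positivity), div_le_iff₀ (by positivity)]
  constructor
  · nlinarith [mul_le_mul_of_nonneg_right hβ (mul_nonneg (hα.le.trans hαβ) hq.le)]
  · nlinarith [mul_le_mul_of_nonneg_right hβ (mul_nonneg hα.le hq.le)]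

theorem stmt4_general (a b : List ℕ)
    (hpa : ∀ x ∈ a, 0 < x) (hpb : ∀ x ∈ b, 0 < x) :
    1 / 2 ≤ (volume (cylinder (a ++ b))).toReal /
        ((volume (cylinder a)).toReal * (volume (cylinder b)).toReal) ∧
      (volume (cylinder (a ++ b))).toReal /
        ((volume (cylinder a)).toReal * (volume (cylinder b)).toReal) ≤ 2 := by
  rw [volume_cylinder (List.forall_mem_append.2 ⟨hpa, hpb⟩), volume_cylinder hpa,
    volume_cylinder hpb, cfVec_append, cfVec_append]
  obtain ⟨-, -, hqa⟩ := cfVec_mem_cone hpa (v := (0, 1)) (by norm_num)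
  obtain ⟨hp₀, hpq₀, hq₀⟩ := cfVec_mem_cone hpb (v := (0, 1)) (by norm_num)
  obtain ⟨hp₁, hpq₁, hq₁⟩ := cfVec_mem_cone hpb (v := (1, 1)) (by norm_num)
  exact distortion_mem_Icc hqa (snd_cfVec_one_one_le hpa) hq₀ hq₁
    (snd_cfVec_mem_Icc a ⟨hp₀, hpq₀⟩) (snd_cfVec_mem_Icc a ⟨hp₁, hpq₁⟩)

theorem stmt4 (a b : List ℕ) (ha : a ≠ []) (hb : b ≠ [])
    (hpa : ∀ x ∈ a, 0 < x) (hpb : ∀ x ∈ b, 0 < x) :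
    1 / 2 ≤ (volume (cylinder (a ++ b))).toReal /
        ((volume (cylinder a)).toReal * (volume (cylinder b)).toReal) ∧
      (volume (cylinder (a ++ b))).toReal /
        ((volume (cylinder a)).toReal * (volume (cylinder b)).toReal) ≤ 2 :=
  stmt4_general a b hpa hpb
end

section
/- Let κ, ρ be positive real numbers and let (x_k) be a sequence of positive real numbers. If x_k ≥ κ x_{k-1} + ρ x_{k+1} holds for all sufficiently large k, then 4κρ ≤ 1. -/
theorem stmt5 (κ ρ : ℝ) (hκ : 0 < κ) (hρ : 0 < ρ) (x : ℕ → ℝ)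
    (hx : ∀ k, 0 < x k)
    (h : ∃ N : ℕ, ∀ k ≥ N, κ * x k + ρ * x (k + 2) ≤ x (k + 1)) :
    4 * κ * ρ ≤ 1 := by
  obtain ⟨N, h⟩ := h
  by_contra hc
  push_neg at hc
  set c := 4 * κ * ρ with hcdef
  have hcpos : 0 < c := by positivity
  -- AM-GM step
  have key : ∀ k, c * (x (N + k) * x (N + k + 2)) ≤ x (N + k + 1) ^ 2 := by
    intro k
    have h1 := h (N + k) (by omega)
    have h2 := hx (N + k); have h3 := hx (N + k + 2)
    rw [hcdef]
    nlinarith [sq_nonneg (κ * x (N + k) - ρ * x (N + k + 2)),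
      mul_le_mul h1 h1 (by positivity) (hx _).le]
  -- geometric decay of ratios
  have main : ∀ k, c ^ k * (x (N + k + 1) * x N) ≤ x (N + 1) * x (N + k) := by
    intro k
    induction k with
    | zero => simp
    | succ k ih =>
      have hk := key k
      have p2 := hx (N + k + 1)
      have p5 := hx (N + 1)
      show c ^ (k + 1) * (x (N + k + 2) * x N) ≤ x (N + 1) * x (N + k + 1)
      have step1 : c ^ (k + 1) * (x (N + k + 2) * x N) * x (N + k + 1)
          ≤ x (N + 1) * x (N + k + 1) * x (N + k + 1) := by
        calc c ^ (k + 1) * (x (N + k + 2) * x N) * x (N + k + 1)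
            = (c * x (N + k + 2)) * (c ^ k * (x (N + k + 1) * x N)) := by ring
          _ ≤ (c * x (N + k + 2)) * (x (N + 1) * x (N + k)) := by
              apply mul_le_mul_of_nonneg_left ih (mul_nonneg hcpos.le (hx _).le)
          _ = x (N + 1) * (c * (x (N + k) * x (N + k + 2))) := by ring
          _ ≤ x (N + 1) * x (N + k + 1) ^ 2 := by
              exact mul_le_mul_of_nonneg_left hk (le_of_lt p5)
          _ = x (N + 1) * x (N + k + 1) * x (N + k + 1) := by ring
      exact le_of_mul_le_mul_right step1 p2
  -- hence c^k * κ * x N ≤ x (N+1) for all k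
  have bdd : ∀ k, c ^ k * κ * x N ≤ x (N + 1) := by
    intro k
    have h1 := h (N + k) (by omega)
    have hratio : κ * x (N + k) ≤ x (N + k + 1) := by
      have := hx (N + k + 2)
      nlinarith
    have hm := main k
    have pk := hx (N + k)
    have pN := hx N
    have hck : 0 < c ^ k := pow_pos hcpos k
    have : c ^ k * κ * x N * x (N + k) ≤ x (N + 1) * x (N + k) := by
      calc c ^ k * κ * x N * x (N + k)
          = c ^ k * ((κ * x (N + k)) * x N) := by ring
        _ ≤ c ^ k * (x (N + k + 1) * x N) := by
            apply mul_le_mul_of_nonneg_left _ (le_of_lt hck)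
            exact mul_le_mul_of_nonneg_right hratio (le_of_lt pN)
        _ ≤ x (N + 1) * x (N + k) := hm
    exact le_of_mul_le_mul_right this pk
  obtain ⟨k, hk⟩ := pow_unbounded_of_one_lt (x (N + 1) / (κ * x N)) hc
  have hb := bdd k
  have pN := hx N
  have : x (N + 1) / (κ * x N) < c ^ k := hk
  rw [div_lt_iff₀ (by positivity)] at this
  nlinarith
end

section
/- Let 1/2 < θ < 1 and define f_θ(γ) = e^γ · ((e^γ + 1)/(e^γ − 1) · θ − 1/(e^γ − 1)) for γ > 0. Then f_θ attains a unique minimum on (0, ∞) at γ = log(1 + √((2θ−1)/θ)), and the minimum value equals (√θ + √(2θ−1))². -/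
/-!
Write `x = exp γ`, `a = √θ`, `b = √(2θ - 1)`, so that `θ = a²` and `1 = 2a² - b²`. Then
`f_θ = (a + b)² + (a (x - 1) - b)² / (x - 1)`, and for `x > 1` the second summand is nonnegative,
vanishing exactly at `x = 1 + b / a`.
-/

open Real

lemma mul_div_sub_eq_sq_add_sq_div {θ a b x : ℝ} (ha : a ^ 2 = θ)
    (hb : b ^ 2 = 2 * θ - 1) (hx : x ≠ 1) :
    x * ((x + 1) / (x - 1) * θ - 1 / (x - 1)) = (a + b) ^ 2 + (a * (x - 1) - b) ^ 2 / (x - 1) := by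
  have hx' : x - 1 ≠ 0 := sub_ne_zero.mpr hx
  field_simp
  linear_combination -(x * (x - 1)) * ha - x * hb

theorem stmt6_general (θ : ℝ) (hθ : 1 / 2 < θ) :
    0 < Real.log (1 + Real.sqrt ((2 * θ - 1) / θ)) ∧
    (fun γ : ℝ => Real.exp γ *
        ((Real.exp γ + 1) / (Real.exp γ - 1) * θ - 1 / (Real.exp γ - 1)))
        (Real.log (1 + Real.sqrt ((2 * θ - 1) / θ)))
      = (Real.sqrt θ + Real.sqrt (2 * θ - 1)) ^ 2 ∧
    ∀ γ : ℝ, 0 < γ → γ ≠ Real.log (1 + Real.sqrt ((2 * θ - 1) / θ)) →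
      (Real.sqrt θ + Real.sqrt (2 * θ - 1)) ^ 2 <
        Real.exp γ * ((Real.exp γ + 1) / (Real.exp γ - 1) * θ - 1 / (Real.exp γ - 1)) := by
  rw [sqrt_div (by linarith : 0 ≤ 2 * θ - 1) θ]
  set a := √θ
  set b := √(2 * θ - 1)
  have ha : a ^ 2 = θ := sq_sqrt (by linarith)
  have hb : b ^ 2 = 2 * θ - 1 := sq_sqrt (by linarith)
  have ha_pos : 0 < a := sqrt_pos.mpr (by linarith)
  have hb_pos : 0 < b := sqrt_pos.mpr (by linarith)
  have hx₀ : 1 < 1 + b / a := lt_add_of_pos_right 1 (div_pos hb_pos ha_pos)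
  refine ⟨log_pos hx₀, ?_, fun γ hγ hne => ?_⟩
  · dsimp only
    rw [exp_log (zero_lt_one.trans hx₀), mul_div_sub_eq_sq_add_sq_div ha hb hx₀.ne',
      add_sub_cancel_left, mul_div_cancel₀ b ha_pos.ne', sub_self]
    simp
  · have hx : 1 < exp γ := one_lt_exp_iff.mpr hγ
    have hgap : a * (exp γ - 1) - b ≠ 0 := by
      refine sub_ne_zero.mpr fun h => hne ?_
      rw [← h, mul_div_cancel_left₀ _ ha_pos.ne', add_sub_cancel, log_exp]
    rw [mul_div_sub_eq_sq_add_sq_div ha hb hx.ne']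
    exact lt_add_of_pos_right _ (div_pos (sq_pos_of_ne_zero hgap) (sub_pos.mpr hx))

theorem stmt6 (θ : ℝ) (hθ : 1 / 2 < θ) (hθ1 : θ < 1) :
    0 < Real.log (1 + Real.sqrt ((2 * θ - 1) / θ)) ∧
    (fun γ : ℝ => Real.exp γ *
        ((Real.exp γ + 1) / (Real.exp γ - 1) * θ - 1 / (Real.exp γ - 1)))
        (Real.log (1 + Real.sqrt ((2 * θ - 1) / θ)))
      = (Real.sqrt θ + Real.sqrt (2 * θ - 1)) ^ 2 ∧
    ∀ γ : ℝ, 0 < γ → γ ≠ Real.log (1 + Real.sqrt ((2 * θ - 1) / θ)) →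
      (Real.sqrt θ + Real.sqrt (2 * θ - 1)) ^ 2 <
        Real.exp γ * ((Real.exp γ + 1) / (Real.exp γ - 1) * θ - 1 / (Real.exp γ - 1)) :=
  stmt6_general θ hθ
end

section
/- Let M ≥ 2 be an integer and θ > 1/2. For any positive integer m, tuple (a_1, …, a_m) of positive integers, suppose exactly the entries at positions j_1 < ⋯ < j_k exceed M. Then q_m(a_1, …, a_m) > (∏_{i=1}^{k} a_{j_i}/2) · q_{m−k}(ω), where ω is the tuple obtained from (a_1, …, a_m) by deleting the entries at positions j_1, …, j_k. -/
def contMat (l : List ℕ) : Matrix (Fin 2) (Fin 2) ℕ := (l.map fun a => !![a, 1; 1, 0]).prod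

lemma contMat_cons (a : ℕ) (l : List ℕ) : contMat (a :: l) = !![a, 1; 1, 0] * contMat l := by
  simp [contMat]

lemma contMat_append (l₁ l₂ : List ℕ) : contMat (l₁ ++ l₂) = contMat l₁ * contMat l₂ := by
  simp [contMat]

lemma contMat_reverse (l : List ℕ) : contMat l.reverse = (contMat l).transpose := by
  have hsymm (a : ℕ) : (!![a, 1; 1, 0] : Matrix (Fin 2) (Fin 2) ℕ).transpose = !![a, 1; 1, 0] := by
    ext i j; fin_cases i <;> fin_cases j <;> rfl
  simp [contMat, Matrix.transpose_list_prod, List.map_reverse, Function.comp_def, hsymm]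

lemma contMat_cons_zero_zero (a : ℕ) (l : List ℕ) :
    contMat (a :: l) 0 0 = a * contMat l 0 0 + contMat l 1 0 := by
  simp [contMat_cons, Matrix.mul_apply]

lemma contMat_cons_one_zero (a : ℕ) (l : List ℕ) : contMat (a :: l) 1 0 = contMat l 0 0 := by
  simp [contMat_cons, Matrix.mul_apply]

lemma contMat_zero_zero (l : List ℕ) : contMat l 0 0 = contQ l := by
  induction l using contQ.induct with
  | case1 => rfl
  | case2 a => simp [contMat, contQ]
  | case3 a b l ih₁ ih₂ => rw [contMat_cons_zero_zero, contMat_cons_one_zero, ih₁, ih₂, contQ]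

lemma contQ_pos {l : List ℕ} (hl : ∀ a ∈ l, 0 < a) : 0 < contQ l := by
  induction l using contQ.induct with
  | case1 => simp [contQ]
  | case2 a => simpa [contQ] using hl
  | case3 a b l ih₁ _ =>
    rw [contQ]
    have := Nat.mul_pos (hl a (by simp)) (ih₁ fun x hx => hl x (by simp_all))
    omega

lemma contMat_one_zero_le {l : List ℕ} (hl : ∀ a ∈ l, 0 < a) : contMat l 1 0 ≤ contMat l 0 0 := by
  cases l with
  | nil => simp [contMat]
  | cons a l =>
    rw [contMat_cons_zero_zero, contMat_cons_one_zero]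
    nlinarith [hl a (by simp)]

lemma contMat_zero_one_le {l : List ℕ} (hl : ∀ a ∈ l, 0 < a) : contMat l 0 1 ≤ contMat l 0 0 := by
  have := contMat_one_zero_le (l := l.reverse) (by simpa using hl)
  simpa [contMat_reverse] using this

lemma contQ_append_cons_gt {a : ℕ} (ha : 0 < a) {pre suf : List ℕ}
    (hpre : ∀ b ∈ pre, 0 < b) (hsuf : ∀ b ∈ suf, 0 < b) :
    (a / 2 : ℝ) * contQ (pre ++ suf) < contQ (pre ++ a :: suf) := by
  set P := contMat pre
  set S := contMat suf
  have hdel : contQ (pre ++ suf) = P 0 0 * S 0 0 + P 0 1 * S 1 0 := by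
    simp [← contMat_zero_zero, contMat_append, Matrix.mul_apply, P, S]
  have hins : contQ (pre ++ a :: suf) = P 0 0 * (a * S 0 0 + S 1 0) + P 0 1 * S 0 0 := by
    simp [← contMat_zero_zero, contMat_append, contMat_cons, Matrix.mul_apply, Matrix.vecMul,
      dotProduct, P, S]
  have hP : P 0 1 ≤ P 0 0 := contMat_zero_one_le hpre
  have hS : S 1 0 ≤ S 0 0 := contMat_one_zero_le hsuf
  have hPS : 1 ≤ P 0 0 * S 0 0 := by
    simp only [P, S, contMat_zero_zero]
    exact Nat.mul_pos (contQ_pos hpre) (contQ_pos hsuf)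
  -- With `X = P₀₀ S₀₀ ≥ 1` and `Y = P₀₁ S₁₀ ≤ min X (P₀₀ S₁₀)`, the right side minus the left
  -- is `a (X - Y) + 2 (P₀₀ S₁₀ + P₀₁ S₀₀) ≥ (X - Y) + Y = X`.
  have key : a * contQ (pre ++ suf) < 2 * contQ (pre ++ a :: suf) := by
    rw [hdel, hins]
    nlinarith [Nat.mul_le_mul hP hS, Nat.mul_le_mul_right (S 1 0) hP]
  have key' : (a : ℝ) * contQ (pre ++ suf) < 2 * contQ (pre ++ a :: suf) := by exact_mod_cast key
  linarith

section Filter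

variable (p : ℕ → Bool)

/- `pre` accumulates the kept entries before the current position, so that every deletion is one
in the middle of a list, as in `contQ_append_cons_gt`. -/
lemma prod_half_filter_mul_contQ_le {t : List ℕ} (ht : ∀ a ∈ t, 0 < a) {pre : List ℕ}
    (hpre : ∀ a ∈ pre, 0 < a) :
    ((t.filter p).map fun a => (a / 2 : ℝ)).prod * contQ (pre ++ t.filter (!p ·))
      ≤ contQ (pre ++ t) := by
  induction t generalizing pre with
  | nil => simp
  | cons a t ih =>
    have ha : 0 < a := ht a (by simp)
    have ht' : ∀ b ∈ t, 0 < b := fun b hb => ht b (by simp [hb])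
    by_cases hpa : p a
    · simp only [List.filter_cons, hpa, if_true, Bool.not_true]
      calc (a / 2 : ℝ) * ((t.filter p).map fun a => (a / 2 : ℝ)).prod
              * contQ (pre ++ t.filter (!p ·))
          ≤ (a / 2 : ℝ) * contQ (pre ++ t) := by
            rw [mul_assoc]; gcongr; exact ih ht' hpre
        _ ≤ contQ (pre ++ a :: t) := (contQ_append_cons_gt ha hpre ht').le
    · have hpre' : ∀ b ∈ pre ++ [a], 0 < b := by simpa [or_imp, forall_and] using ⟨hpre, ha⟩
      simpa [List.filter_cons, hpa] using ih ht' hpre'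

lemma prod_half_filter_mul_contQ_lt {t : List ℕ} (ht : ∀ a ∈ t, 0 < a) (hex : ∃ a ∈ t, p a)
    {pre : List ℕ} (hpre : ∀ a ∈ pre, 0 < a) :
    ((t.filter p).map fun a => (a / 2 : ℝ)).prod * contQ (pre ++ t.filter (!p ·))
      < contQ (pre ++ t) := by
  induction t generalizing pre with
  | nil => simp at hex
  | cons a t ih =>
    have ha : 0 < a := ht a (by simp)
    have ht' : ∀ b ∈ t, 0 < b := fun b hb => ht b (by simp [hb])
    by_cases hpa : p a
    · simp only [List.filter_cons, hpa, if_true, Bool.not_true]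
      calc (a / 2 : ℝ) * ((t.filter p).map fun a => (a / 2 : ℝ)).prod
              * contQ (pre ++ t.filter (!p ·))
          ≤ (a / 2 : ℝ) * contQ (pre ++ t) := by
            rw [mul_assoc]; gcongr; exact prod_half_filter_mul_contQ_le p ht' hpre
        _ < contQ (pre ++ a :: t) := contQ_append_cons_gt ha hpre ht'
    · have hex' : ∃ b ∈ t, p b := by simpa [hpa] using hex
      have hpre' : ∀ b ∈ pre ++ [a], 0 < b := by simpa [or_imp, forall_and] using ⟨hpre, ha⟩
      simpa [List.filter_cons, hpa] using ih ht' hex' hpre'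

end Filter

theorem stmt19_general (M : ℕ) (l : List ℕ) (hpos : ∀ a ∈ l, 0 < a)
    (hex : ∃ a ∈ l, M < a) :
    ((l.filter (fun a => decide (M < a))).map (fun a => (a : ℝ) / 2)).prod *
        (contQ (l.filter (fun a => decide (a ≤ M))) : ℝ)
      < (contQ l : ℝ) := by
  have hsmall : l.filter (fun a => decide (a ≤ M)) = l.filter (fun a => !decide (M < a)) :=
    List.filter_congr fun a _ => by simp only [← decide_not, Nat.not_lt]
  rw [hsmall]
  simpa using prod_half_filter_mul_contQ_lt (fun a => decide (M < a)) hpos (by simpa using hex)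
    (pre := []) (by simp)

theorem stmt19 (M : ℕ) (hM : 2 ≤ M) (θ : ℝ) (hθ : 1 / 2 < θ)
    (l : List ℕ) (hl : l ≠ []) (hpos : ∀ a ∈ l, 0 < a)
    (hex : ∃ a ∈ l, M < a) :
    ((l.filter (fun a => decide (M < a))).map (fun a => (a : ℝ) / 2)).prod *
        (contQ (l.filter (fun a => decide (a ≤ M))) : ℝ)
      < (contQ l : ℝ) :=
  stmt19_general M l hpos hex
end
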